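/- arXiv:2601.07332 — 2 statements merged into one kernel-verified Lean document; each statement's English description precedes it below -/
import Mathlib

section
/- For every u ∈ F³, the map δ₁(u) on the split-octonion algebra O sending the Zorn matrix (α', u'; v', β') to (α' − u·v', (α' − β' − u·v')u + u'; v' − u'×u, β' + u·v') is an F-algebra automorphism of O; likewise, for every v ∈ F³, the map δ₂(v) sending (α', u'; v', β') to (α' + u'·v, u' + v'×v; (−α' + β' − u'·v)v + v', β' − u'·v) is an F-algebra automorphism of O. -/
@[ext]
structure Zorn (F : Type*) where
  x1 : F
  u : Fin 3 → F
  v : Fin 3 → F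
  x2 : F

namespace Zorn

variable {F : Type*} [Field F]

/-- Dot product on `F³`. -/
def dot (x y : Fin 3 → F) : F := x 0 * y 0 + x 1 * y 1 + x 2 * y 2

/-- Cross product on `F³`. -/
def cross (x y : Fin 3 → F) : Fin 3 → F :=
  ![x 1 * y 2 - x 2 * y 1, x 2 * y 0 - x 0 * y 2, x 0 * y 1 - x 1 * y 0]

instance : Add (Zorn F) :=
  ⟨fun a b => ⟨a.x1 + b.x1, a.u + b.u, a.v + b.v, a.x2 + b.x2⟩⟩

instance : Zero (Zorn F) := ⟨⟨0, 0, 0, 0⟩⟩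

instance : Neg (Zorn F) := ⟨fun a => ⟨-a.x1, -a.u, -a.v, -a.x2⟩⟩

instance : Sub (Zorn F) :=
  ⟨fun a b => ⟨a.x1 - b.x1, a.u - b.u, a.v - b.v, a.x2 - b.x2⟩⟩

instance : SMul F (Zorn F) :=
  ⟨fun c a => ⟨c * a.x1, c • a.u, c • a.v, c * a.x2⟩⟩

/-- Zorn vector-matrix multiplication. -/
instance : Mul (Zorn F) :=
  ⟨fun a b =>
    ⟨a.x1 * b.x1 + dot a.u b.v,
     a.x1 • b.u + b.x2 • a.u - cross a.v b.v,
     b.x1 • a.v + a.x2 • b.v + cross a.u b.u,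
     a.x2 * b.x2 + dot a.v b.u⟩⟩

instance : One (Zorn F) := ⟨⟨1, 0, 0, 1⟩⟩

@[simp] lemma add_def (a b : Zorn F) :
    a + b = ⟨a.x1 + b.x1, a.u + b.u, a.v + b.v, a.x2 + b.x2⟩ := rfl
@[simp] lemma zero_def : (0 : Zorn F) = ⟨0, 0, 0, 0⟩ := rfl
@[simp] lemma neg_def (a : Zorn F) : -a = ⟨-a.x1, -a.u, -a.v, -a.x2⟩ := rfl
@[simp] lemma sub_def (a b : Zorn F) :
    a - b = ⟨a.x1 - b.x1, a.u - b.u, a.v - b.v, a.x2 - b.x2⟩ := rfl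
@[simp] lemma smul_def (c : F) (a : Zorn F) :
    c • a = ⟨c * a.x1, c • a.u, c • a.v, c * a.x2⟩ := rfl

instance : AddCommGroup (Zorn F) where
  add_assoc a b c := by ext <;> simp [add_assoc]
  zero_add a := by ext <;> simp
  add_zero a := by ext <;> simp
  add_comm a b := by ext <;> simp [add_comm]
  neg_add_cancel a := by ext <;> simp
  sub_eq_add_neg a b := by ext <;> simp [sub_eq_add_neg]
  nsmul := nsmulRec
  zsmul := zsmulRec

instance : Module F (Zorn F) where
  one_smul a := by ext <;> simp
  mul_smul c d a := by ext <;> simp [mul_assoc, mul_smul]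
  smul_zero c := by ext <;> simp
  smul_add c a b := by ext <;> simp [mul_add]
  add_smul c d a := by ext <;> simp [add_mul, add_smul]
  zero_smul a := by ext <;> simp

/-- The trace of a split octonion. -/
def trace (a : Zorn F) : F := a.x1 + a.x2

/-- The norm of a split octonion. -/
def norm (a : Zorn F) : F := a.x1 * a.x2 - dot a.u a.v

/-- The conjugate of a split octonion. -/
def conj (a : Zorn F) : Zorn F := ⟨a.x2, -a.u, -a.v, a.x1⟩

end Zorn

namespace Zorn

variable {F : Type*} [Field F]

/-- Iterated powers of a split octonion (well defined by power-associativity). -/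
def pow (a : Zorn F) : ℕ → Zorn F
  | 0 => 1
  | n + 1 => a * pow a n

/-- `P y z n` is the generalized Fibonacci polynomial `p_{n-1}(y,z)`:
`p_{-1} = 0`, `p_0 = 1`, `p_{k+1} = y p_k + z p_{k-1}`. -/
def P (y z : F) : ℕ → F
  | 0 => 0
  | 1 => 1
  | n + 2 => y * P y z (n + 1) + z * P y z n

/-- `f̂(y,z) = Σ_{k=1}^n α_k p_{k-1}(y,z)`. -/
def fHat (n : ℕ) (α : ℕ → F) (y z : F) : F := ∑ k ∈ Finset.Icc 1 n, α k * P y z k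

/-- `f̌(y,z) = Σ_{k=1}^n α_k p_{k-2}(y,z)`. -/
def fCheck (n : ℕ) (α : ℕ → F) (y z : F) : F := ∑ k ∈ Finset.Icc 1 n, α k * P y z (k - 1)

/-- `f(x) = Σ_{k=1}^n α_k x^k` for `x` in the split octonions. -/
def fOct (n : ℕ) (α : ℕ → F) (x : Zorn F) : Zorn F := ∑ k ∈ Finset.Icc 1 n, α k • pow x k

/-- `f(ν) = Σ_{k=1}^n α_k ν^k` for `ν ∈ F`. -/
def fScalar (n : ℕ) (α : ℕ → F) (y : F) : F := ∑ k ∈ Finset.Icc 1 n, α k * y ^ k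

/-- `g : O → O` is an `F`-algebra automorphism of the split octonions. -/
def IsAlgAut (g : Zorn F → Zorn F) : Prop :=
  Function.Bijective g ∧ (∀ a b, g (a + b) = g a + g b) ∧
    (∀ (c : F) (a : Zorn F), g (c • a) = c • g a) ∧
    (∀ a b, g (a * b) = g a * g b) ∧ g 1 = 1

/-- The `Aut(O)`-orbit of a split octonion. -/
def orbit (a : Zorn F) : Set (Zorn F) := {x | ∃ g, IsAlgAut g ∧ g a = x}

/-- The canonical octonion `c(α,β)`. -/
def cmat (α β : F) : Zorn F := ⟨α, ![β, 0, 0], ![1, 0, 0], 0⟩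

end Zorn

namespace Zorn

/-- The map `δ₁(u)`. -/
def delta1 {F : Type*} [Field F] (u : Fin 3 → F) (a : Zorn F) : Zorn F :=
  ⟨a.x1 - dot u a.v, (a.x1 - a.x2 - dot u a.v) • u + a.u, a.v - cross a.u u,
    a.x2 + dot u a.v⟩

/-- The map `δ₂(v)`. -/
def delta2 {F : Type*} [Field F] (v : Fin 3 → F) (a : Zorn F) : Zorn F :=
  ⟨a.x1 + dot a.u v, a.u + cross a.v v, (-a.x1 + a.x2 - dot a.u v) • v + a.v,
    a.x2 - dot a.u v⟩

end Zorn

namespace Zorn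

variable {F : Type*} [Field F]

private lemma delta1_delta1 (u : Fin 3 → F) (a : Zorn F) :
    delta1 (-u) (delta1 u a) = a := by
  apply Zorn.ext <;> try (funext i; fin_cases i)
  all_goals simp [delta1, dot, cross, Matrix.vecHead, Matrix.vecTail]
  all_goals ring

private lemma delta2_delta2 (v : Fin 3 → F) (a : Zorn F) :
    delta2 (-v) (delta2 v a) = a := by
  apply Zorn.ext <;> try (funext i; fin_cases i)
  all_goals simp [delta2, dot, cross, Matrix.vecHead, Matrix.vecTail]
  all_goals ring

private lemma delta1_add (u : Fin 3 → F) (a b : Zorn F) :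
    delta1 u (a + b) = delta1 u a + delta1 u b := by
  apply Zorn.ext <;> try (funext i; fin_cases i)
  all_goals simp [delta1, dot, cross, Matrix.vecHead, Matrix.vecTail]
  all_goals ring

private lemma delta2_add (v : Fin 3 → F) (a b : Zorn F) :
    delta2 v (a + b) = delta2 v a + delta2 v b := by
  apply Zorn.ext <;> try (funext i; fin_cases i)
  all_goals simp [delta2, dot, cross, Matrix.vecHead, Matrix.vecTail]
  all_goals ring

private lemma delta1_smul (u : Fin 3 → F) (c : F) (a : Zorn F) :
    delta1 u (c • a) = c • delta1 u a := by
  apply Zorn.ext <;> try (funext i; fin_cases i)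
  all_goals simp [delta1, dot, cross, Matrix.vecHead, Matrix.vecTail]
  all_goals ring

private lemma delta2_smul (v : Fin 3 → F) (c : F) (a : Zorn F) :
    delta2 v (c • a) = c • delta2 v a := by
  apply Zorn.ext <;> try (funext i; fin_cases i)
  all_goals simp [delta2, dot, cross, Matrix.vecHead, Matrix.vecTail]
  all_goals ring

@[simp] private lemma mul_def (a b : Zorn F) :
    a * b = ⟨a.x1 * b.x1 + dot a.u b.v,
      a.x1 • b.u + b.x2 • a.u - cross a.v b.v,
      b.x1 • a.v + a.x2 • b.v + cross a.u b.u,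
      a.x2 * b.x2 + dot a.v b.u⟩ := rfl

@[simp] private lemma one_def : (1 : Zorn F) = ⟨1, 0, 0, 1⟩ := rfl

set_option maxHeartbeats 2000000 in
private lemma delta1_mul (u : Fin 3 → F) (a b : Zorn F) :
    delta1 u (a * b) = delta1 u a * delta1 u b := by
  apply Zorn.ext <;> try (funext i; fin_cases i)
  all_goals simp [delta1, dot, cross, Matrix.vecHead, Matrix.vecTail]
  all_goals ring

set_option maxHeartbeats 2000000 in
private lemma delta2_mul (v : Fin 3 → F) (a b : Zorn F) :
    delta2 v (a * b) = delta2 v a * delta2 v b := by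
  apply Zorn.ext <;> try (funext i; fin_cases i)
  all_goals simp [delta2, dot, cross, Matrix.vecHead, Matrix.vecTail]
  all_goals ring

private lemma delta1_one (u : Fin 3 → F) : delta1 u (1 : Zorn F) = 1 := by
  apply Zorn.ext <;> try (funext i; fin_cases i)
  all_goals simp [delta1, dot, cross, Matrix.vecHead, Matrix.vecTail]

private lemma delta2_one (v : Fin 3 → F) : delta2 v (1 : Zorn F) = 1 := by
  apply Zorn.ext <;> try (funext i; fin_cases i)
  all_goals simp [delta2, dot, cross, Matrix.vecHead, Matrix.vecTail]

end Zorn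

/-- for every `u ∈ F³` the map `δ₁(u)` is an `F`-algebra automorphism of the
split octonions, and likewise for every `v ∈ F³` the map `δ₂(v)` is one. -/
theorem zorn_delta_isAlgAut {F : Type*} [Field F] :
    (∀ u : Fin 3 → F, Zorn.IsAlgAut (Zorn.delta1 u)) ∧
    (∀ v : Fin 3 → F, Zorn.IsAlgAut (Zorn.delta2 v)) := by
  constructor
  · intro u
    refine ⟨?_, Zorn.delta1_add u, Zorn.delta1_smul u, Zorn.delta1_mul u,
      Zorn.delta1_one u⟩
    rw [Function.bijective_iff_has_inverse]
    exact ⟨Zorn.delta1 (-u), fun a => by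
        simpa using Zorn.delta1_delta1 u a,
      fun a => by simpa using Zorn.delta1_delta1 (-u) a⟩
  · intro v
    refine ⟨?_, Zorn.delta2_add v, Zorn.delta2_smul v, Zorn.delta2_mul v,
      Zorn.delta2_one v⟩
    rw [Function.bijective_iff_has_inverse]
    exact ⟨Zorn.delta2 (-v), fun a => by
        simpa using Zorn.delta2_delta2 v a,
      fun a => by simpa using Zorn.delta2_delta2 (-v) a⟩
end

section
/- Let f(y) ∈ F[y] be a nonzero polynomial of degree n ≥ 1 without constant term, and let c ∈ O be an element not of the form γ·1 with γ ∈ F. Then the set X of all solutions x ∈ O of the equation f(x) = c is finite with |X| ≤ n². -/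
namespace ZornAux

open Zorn

section Octo
variable {F : Type*} [Field F]

@[simp] lemma mul_def' (a b : Zorn F) :
    a * b = ⟨a.x1 * b.x1 + dot a.u b.v,
     a.x1 • b.u + b.x2 • a.u - cross a.v b.v,
     b.x1 • a.v + a.x2 • b.v + cross a.u b.u,
     a.x2 * b.x2 + dot a.v b.u⟩ := rfl

@[simp] lemma one_def' : (1 : Zorn F) = ⟨1, 0, 0, 1⟩ := rfl

lemma dot_add_right (u v w : Fin 3 → F) : dot u (v + w) = dot u v + dot u w := by
  simp [dot]; ring
lemma dot_add_left (u v w : Fin 3 → F) : dot (u + v) w = dot u w + dot v w := by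
  simp [dot]; ring
lemma dot_smul_right (r : F) (u v : Fin 3 → F) : dot u (r • v) = r * dot u v := by
  simp [dot]; ring
lemma dot_smul_left (r : F) (u v : Fin 3 → F) : dot (r • u) v = r * dot u v := by
  simp [dot]; ring
@[simp] lemma dot_zero_right (u : Fin 3 → F) : dot u 0 = 0 := by simp [dot]
@[simp] lemma dot_zero_left (u : Fin 3 → F) : dot 0 u = 0 := by simp [dot]
lemma dot_comm (u v : Fin 3 → F) : dot u v = dot v u := by simp [dot]; ring

lemma cross_add_right (u v w : Fin 3 → F) : cross u (v + w) = cross u v + cross u w := by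
  funext i; fin_cases i <;> simp [cross] <;> ring
lemma cross_add_left (u v w : Fin 3 → F) : cross (u + v) w = cross u w + cross v w := by
  funext i; fin_cases i <;> simp [cross] <;> ring
lemma cross_smul_right (r : F) (u v : Fin 3 → F) : cross u (r • v) = r • cross u v := by
  funext i; fin_cases i <;> simp [cross] <;> ring
lemma cross_smul_left (r : F) (u v : Fin 3 → F) : cross (r • u) v = r • cross u v := by
  funext i; fin_cases i <;> simp [cross] <;> ring
@[simp] lemma cross_self (u : Fin 3 → F) : cross u u = 0 := by
  funext i; fin_cases i <;> simp [cross] <;> ring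
@[simp] lemma cross_zero_right (u : Fin 3 → F) : cross u 0 = 0 := by
  funext i; fin_cases i <;> simp [cross]
@[simp] lemma cross_zero_left (u : Fin 3 → F) : cross 0 u = 0 := by
  funext i; fin_cases i <;> simp [cross]

lemma zmul_one (a : Zorn F) : a * 1 = a := by
  ext <;>
    simp [dot_add_right, dot_add_left, dot_smul_right, dot_smul_left, dot_comm,
      cross_add_right, cross_add_left, cross_smul_right, cross_smul_left] <;>
    first
      | ring
      | module

lemma zmul_add (a b c : Zorn F) : a * (b + c) = a * b + a * c := by
  ext <;>
    simp [dot_add_right, dot_add_left, dot_smul_right, dot_smul_left, dot_comm,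
      cross_add_right, cross_add_left, cross_smul_right, cross_smul_left] <;>
    first
      | ring
      | module

lemma zadd_mul (a b c : Zorn F) : (a + b) * c = a * c + b * c := by
  ext <;>
    simp [dot_add_right, dot_add_left, dot_smul_right, dot_smul_left, dot_comm,
      cross_add_right, cross_add_left, cross_smul_right, cross_smul_left] <;>
    first
      | ring
      | module

lemma zmul_smul (r : F) (a b : Zorn F) : a * (r • b) = r • (a * b) := by
  ext <;>
    simp [dot_add_right, dot_add_left, dot_smul_right, dot_smul_left, dot_comm,
      cross_add_right, cross_add_left, cross_smul_right, cross_smul_left] <;>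
    first
      | ring
      | module

lemma zsmul_mul (r : F) (a b : Zorn F) : (r • a) * b = r • (a * b) := by
  ext <;>
    simp [dot_add_right, dot_add_left, dot_smul_right, dot_smul_left, dot_comm,
      cross_add_right, cross_add_left, cross_smul_right, cross_smul_left] <;>
    first
      | ring
      | module

lemma sq_eq (a : Zorn F) : a * a = trace a • a + (- Zorn.norm a) • 1 := by
  ext <;>
    simp [trace, Zorn.norm, dot_comm] <;>
    first
      | ring
      | module

/-- scalar multiples of `1` characterised on components -/
lemma smul_one_x1 {b b' : F} (h : b • (1 : Zorn F) = b' • (1 : Zorn F)) : b = b' := by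
  have := congrArg Zorn.x1 h
  simpa using this

lemma scalar_zero {x : Zorn F} (hx : ∀ γ : F, x ≠ γ • (1 : Zorn F)) {a b : F}
    (h : a • x + b • (1 : Zorn F) = 0) : a = 0 ∧ b = 0 := by
  by_cases ha : a = 0
  · subst ha
    refine ⟨rfl, ?_⟩
    have := congrArg Zorn.x1 h
    simpa using this
  · exfalso
    apply hx (a⁻¹ * (-b))
    have h1 : a • x = (-b) • (1 : Zorn F) := by
      linear_combination (norm := module) h
    calc x = (a⁻¹ * a) • x := by rw [inv_mul_cancel₀ ha, one_smul]
    _ = a⁻¹ • (a • x) := mul_smul _ _ _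
    _ = a⁻¹ • ((-b) • (1 : Zorn F)) := by rw [h1]
    _ = (a⁻¹ * (-b)) • (1 : Zorn F) := (mul_smul _ _ _).symm

/-- linear independence of `1` and a non-scalar `x` -/
lemma indep {x : Zorn F} (hx : ∀ γ : F, x ≠ γ • (1 : Zorn F)) {a b a' b' : F}
    (h : a • x + b • (1 : Zorn F) = a' • x + b' • (1 : Zorn F)) : a = a' ∧ b = b' := by
  have h0 : (a - a') • x + (b - b') • (1 : Zorn F) = 0 := by
    linear_combination (norm := module) h
  obtain ⟨e1, e2⟩ := scalar_zero hx h0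
  exact ⟨sub_eq_zero.1 e1, sub_eq_zero.1 e2⟩

lemma zone_mul (a : Zorn F) : 1 * a = a := by
  ext <;>
    simp [dot_comm] <;>
    first
      | ring
      | module

lemma P_rec (y z : F) {k : ℕ} (hk : 1 ≤ k) :
    P y z (k + 1) = y * P y z k + z * P y z (k - 1) := by
  obtain ⟨m, rfl⟩ := Nat.exists_eq_add_of_le hk
  rw [show 1 + m + 1 = m + 2 from by omega, show 1 + m = m + 1 from by omega]
  simp [P]

lemma pow_formula (x : Zorn F) : ∀ k, 1 ≤ k →
    pow x k = P (trace x) (-Zorn.norm x) k • x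
      + ((-Zorn.norm x) * P (trace x) (-Zorn.norm x) (k - 1)) • (1 : Zorn F) := by
  intro k hk
  induction k, hk using Nat.le_induction with
  | base => simp [pow, P, zmul_one]
  | succ k hk ih =>
    have hdef : pow x (k + 1) = x * pow x k := rfl
    rw [hdef, ih, zmul_add, zmul_smul, zmul_smul, zmul_one, sq_eq, P_rec _ _ hk,
      Nat.add_sub_cancel]
    match_scalars <;> ring

lemma fOct_formula (n : ℕ) (α : ℕ → F) (x : Zorn F) :
    fOct n α x = fHat n α (trace x) (-Zorn.norm x) • x
      + ((-Zorn.norm x) * fCheck n α (trace x) (-Zorn.norm x)) • (1 : Zorn F) := by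
  unfold fOct fHat fCheck
  calc ∑ k ∈ Finset.Icc 1 n, α k • pow x k
      = ∑ k ∈ Finset.Icc 1 n,
          ((α k * P (trace x) (-Zorn.norm x) k) • x
            + ((-Zorn.norm x) * (α k * P (trace x) (-Zorn.norm x) (k - 1))) • (1 : Zorn F)) := by
        refine Finset.sum_congr rfl fun k hk => ?_
        rw [pow_formula x k (Finset.mem_Icc.1 hk).1]
        match_scalars <;> ring
    _ = (∑ k ∈ Finset.Icc 1 n, α k * P (trace x) (-Zorn.norm x) k) • x
        + (∑ k ∈ Finset.Icc 1 n, (-Zorn.norm x) * (α k * P (trace x) (-Zorn.norm x) (k - 1)))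
            • (1 : Zorn F) := by
        rw [Finset.sum_add_distrib, ← Finset.sum_smul, ← Finset.sum_smul]
    _ = _ := by rw [← Finset.mul_sum]

lemma solution_props {n : ℕ} {α : ℕ → F} {c x : Zorn F} (hc : ∀ γ : F, c ≠ γ • (1 : Zorn F))
    (hx : fOct n α x = c) :
    fHat n α (trace x) (-Zorn.norm x) ≠ 0 ∧
    x = (fHat n α (trace x) (-Zorn.norm x))⁻¹
        • (c - ((-Zorn.norm x) * fCheck n α (trace x) (-Zorn.norm x)) • (1 : Zorn F)) ∧
    fHat n α (trace x) (-Zorn.norm x) * trace x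
        + 2 * ((-Zorn.norm x) * fCheck n α (trace x) (-Zorn.norm x)) = trace c ∧
    (fHat n α (trace x) (-Zorn.norm x))^2 * (-Zorn.norm x)
        + ((-Zorn.norm x) * fCheck n α (trace x) (-Zorn.norm x))^2
      = trace c * ((-Zorn.norm x) * fCheck n α (trace x) (-Zorn.norm x)) - Zorn.norm c := by
  set tc := trace c with htc
  set nc := Zorn.norm c with hnc
  set y := trace x with hy
  set z := -Zorn.norm x with hz
  set h := fHat n α y z with hh'
  set s := z * fCheck n α y z with hs'
  have hcx : c = h • x + s • (1 : Zorn F) := by rw [← hx, fOct_formula]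
  have hh : h ≠ 0 := by
    intro h0
    exact hc s (by rw [hcx, h0, zero_smul, zero_add])
  have hxns : ∀ γ : F, x ≠ γ • (1 : Zorn F) := by
    intro γ hγ
    exact hc (h * γ + s) (by rw [hcx, hγ, smul_smul, ← add_smul])
  have hxeq : x = h⁻¹ • (c - s • (1 : Zorn F)) := by
    rw [hcx, add_sub_cancel_right, smul_smul, inv_mul_cancel₀ hh, one_smul]
  have hxx : x * x = y • x + z • (1 : Zorn F) := by rw [sq_eq, ← hy, ← hz]
  have hcc1 : c * c = (tc * h) • x + (tc * s - nc) • (1 : Zorn F) := by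
    have h1 : c * c = tc • c + (-nc) • (1 : Zorn F) := by rw [sq_eq, ← htc, ← hnc]
    rw [h1, hcx]
    match_scalars <;> ring
  have hcc2 : c * c = (h * h * y + 2 * (h * s)) • x + (h * h * z + s * s) • (1 : Zorn F) := by
    rw [hcx]
    simp only [zmul_add, zadd_mul, zsmul_mul, zmul_smul, zone_mul, zmul_one]
    rw [hxx]
    match_scalars <;> ring
  obtain ⟨e1, e2⟩ := indep hxns (hcc2.symm.trans hcc1)
  have e1' : h * y + 2 * s = tc :=
    mul_left_cancel₀ hh (by linear_combination e1)
  exact ⟨hh, hxeq, e1', by linear_combination e2⟩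

end Octo

section Scalar
variable {F : Type*} [Field F]

lemma map_P {K : Type*} [Field K] (φ : F →+* K) (y z : F) :
    ∀ k, φ (P y z k) = P (φ y) (φ z) k := by
  intro k
  induction k using Nat.strong_induction_on with
  | _ k ih =>
    match k with
    | 0 => simp [P]
    | 1 => simp [P]
    | (m + 2) => simp [P, ih (m + 1) (by omega), ih m (by omega)]

lemma map_fHat {K : Type*} [Field K] (φ : F →+* K) (n : ℕ) (α : ℕ → F) (y z : F) :
    φ (fHat n α y z) = fHat n (fun k => φ (α k)) (φ y) (φ z) := by
  unfold fHat
  rw [map_sum]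
  exact Finset.sum_congr rfl fun k _ => by rw [map_mul, map_P]

lemma map_fCheck {K : Type*} [Field K] (φ : F →+* K) (n : ℕ) (α : ℕ → F) (y z : F) :
    φ (fCheck n α y z) = fCheck n (fun k => φ (α k)) (φ y) (φ z) := by
  unfold fCheck
  rw [map_sum]
  exact Finset.sum_congr rfl fun k _ => by rw [map_mul, map_P]

lemma scalar_pow (y z ρ : F) (hρ : ρ * ρ = y * ρ + z) :
    ∀ k, 1 ≤ k → ρ ^ k = P y z k * ρ + z * P y z (k - 1) := by
  intro k hk
  induction k, hk using Nat.le_induction with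
  | base => simp [P]
  | succ k hk ih =>
    have hdef : ρ ^ (k + 1) = ρ * ρ ^ k := by ring
    rw [hdef, ih, P_rec _ _ hk, Nat.add_sub_cancel]
    linear_combination P y z k * hρ

lemma scalar_f (n : ℕ) (a : ℕ → F) (y z ρ : F) (hρ : ρ * ρ = y * ρ + z) :
    ∑ k ∈ Finset.Icc 1 n, a k * ρ ^ k = fHat n a y z * ρ + z * fCheck n a y z := by
  unfold fHat fCheck
  rw [Finset.sum_mul, Finset.mul_sum, ← Finset.sum_add_distrib]
  refine Finset.sum_congr rfl fun k hk => ?_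
  rw [scalar_pow y z ρ hρ k (Finset.mem_Icc.1 hk).1]
  ring

lemma key_alg (h s y z t m ρ σ w₁ w₂ : F) (e1 : h * y + 2 * s = t)
    (e2 : h ^ 2 * z + s ^ 2 = t * s - m) (hsum : ρ + σ = y) (hprod : ρ * σ = -z)
    (hw : w₁ + w₂ = t) (hw2 : w₁ * w₂ = m) :
    (h * ρ + s = w₁ ∧ h * σ + s = w₂) ∨ (h * ρ + s = w₂ ∧ h * σ + s = w₁) := by
  have hab : (h * ρ + s) + (h * σ + s) = w₁ + w₂ := by
    rw [hw]; linear_combination h * hsum + e1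
  have hab2 : (h * ρ + s) * (h * σ + s) = w₁ * w₂ := by
    rw [hw2]
    linear_combination h^2 * hprod + s * h * hsum + s * e1 - e2
  have hq : ((h * ρ + s) - w₁) * ((h * ρ + s) - w₂) = 0 := by
    linear_combination (h * ρ + s) * hab - hab2
  rcases mul_eq_zero.1 hq with h1 | h1
  · left
    have e : h * ρ + s = w₁ := sub_eq_zero.1 h1
    exact ⟨e, by linear_combination hab - e⟩
  · right
    have e : h * ρ + s = w₂ := sub_eq_zero.1 h1
    exact ⟨e, by linear_combination hab - e⟩

lemma exists_quad_root {K : Type*} [Field K] [IsAlgClosed K] (b d : K) :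
    ∃ ρ : K, ρ * ρ = b * ρ + d := by
  have hq : (Polynomial.X ^ 2 - Polynomial.C b * Polynomial.X - Polynomial.C d : Polynomial K)
      = Polynomial.C 1 * Polynomial.X ^ 2 + Polynomial.C (-b) * Polynomial.X
        + Polynomial.C (-d) := by
    simp only [map_neg, Polynomial.C_1]
    ring
  obtain ⟨ρ, hρ⟩ := IsAlgClosed.exists_root
    (Polynomial.X ^ 2 - Polynomial.C b * Polynomial.X - Polynomial.C d : Polynomial K)
    (by rw [hq, Polynomial.degree_quadratic one_ne_zero]; norm_num)
  refine ⟨ρ, ?_⟩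
  have h0 : ρ ^ 2 - b * ρ - d = 0 := by simpa using hρ
  linear_combination h0

lemma root_set_bound {K : Type*} [Field K] (n : ℕ) (hn : 1 ≤ n) (a : ℕ → K) (ha : a n ≠ 0)
    (w : K) :
    {ρ : K | ∑ k ∈ Finset.Icc 1 n, a k * ρ ^ k = w}.Finite ∧
      {ρ : K | ∑ k ∈ Finset.Icc 1 n, a k * ρ ^ k = w}.ncard ≤ n := by
  classical
  set p : Polynomial K :=
    (∑ k ∈ Finset.Icc 1 n, Polynomial.C (a k) * Polynomial.X ^ k) - Polynomial.C w with hp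
  have hcoeff : p.coeff n = a n := by
    rw [hp, Polynomial.coeff_sub, Polynomial.finset_sum_coeff]
    rw [Finset.sum_eq_single n
      (fun k _ hkn => by
        simp [Polynomial.coeff_C_mul, Polynomial.coeff_X_pow, Ne.symm hkn])
      (fun hn' => absurd (Finset.mem_Icc.2 ⟨hn, le_refl n⟩) hn')]
    have hne : n ≠ 0 := by omega
    simp [Polynomial.coeff_C_mul, Polynomial.coeff_X_pow, Polynomial.coeff_C, hne]
  have hpne : p ≠ 0 := fun h0 => ha (by rw [← hcoeff, h0, Polynomial.coeff_zero])
  have hdeg : p.natDegree ≤ n := by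
    refine le_trans (Polynomial.natDegree_sub_le _ _) (max_le ?_ ?_)
    · refine Polynomial.natDegree_sum_le_of_forall_le _ _ fun k hk => ?_
      refine le_trans (Polynomial.natDegree_C_mul_le _ _) ?_
      rw [Polynomial.natDegree_X_pow]
      exact (Finset.mem_Icc.1 hk).2
    · simp
  have hroot : ∀ ρ : K, ∑ k ∈ Finset.Icc 1 n, a k * ρ ^ k = w → p.IsRoot ρ := by
    intro ρ hρ
    rw [Polynomial.IsRoot.def, hp, Polynomial.eval_sub, Polynomial.eval_C,
      Polynomial.eval_finset_sum]
    simp only [Polynomial.eval_mul, Polynomial.eval_C, Polynomial.eval_pow, Polynomial.eval_X]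
    rw [hρ, sub_self]
  have hsub : {ρ : K | ∑ k ∈ Finset.Icc 1 n, a k * ρ ^ k = w} ⊆ ↑p.roots.toFinset := by
    intro ρ hρ
    simp only [Set.mem_setOf_eq] at hρ
    simp only [Finset.coe_sort_coe, Finset.mem_coe, Multiset.mem_toFinset]
    exact (Polynomial.mem_roots hpne).2 (hroot ρ hρ)
  refine ⟨Set.Finite.subset (p.roots.toFinset : Finset K).finite_toSet hsub, ?_⟩
  refine le_trans (Set.ncard_le_ncard hsub (Finset.finite_toSet _)) ?_
  rw [Set.ncard_coe_finset]
  exact le_trans (Multiset.toFinset_card_le _) (le_trans (Polynomial.card_roots' p) hdeg)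

end Scalar


end ZornAux

/-- for a nonzero polynomial `f` of degree `n ≥ 1` without constant term and a
non-scalar `c`, the set of solutions of `f(x) = c` is finite of cardinality at most `n²`. -/
theorem zorn_solutions_finite {F : Type*} [Field F] (n : ℕ) (hn : 1 ≤ n) (α : ℕ → F)
    (hα : α n ≠ 0) (c : Zorn F) (hc : ∀ γ : F, c ≠ γ • (1 : Zorn F)) :
    {x : Zorn F | Zorn.fOct n α x = c}.Finite ∧
      {x : Zorn F | Zorn.fOct n α x = c}.ncard ≤ n ^ 2 := by
  classical
  set X := {x : Zorn F | Zorn.fOct n α x = c} with hX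
  set K := AlgebraicClosure F with hK
  set ι : F →+* K := (algebraMap F K : F →+* K) with hι
  have ιinj : Function.Injective ι := ι.injective
  have hαK : ι (α n) ≠ 0 := fun h0 => hα (ιinj (h0.trans (map_zero ι).symm))
  -- the two roots of the characteristic polynomial of c
  obtain ⟨w₁, hw₁⟩ := ZornAux.exists_quad_root (ι (Zorn.trace c)) (-(ι (Zorn.norm c)))
  set w₂ := ι (Zorn.trace c) - w₁ with hw₂def
  have hwsum : w₁ + w₂ = ι (Zorn.trace c) := by rw [hw₂def]; ring
  have hwprod : w₁ * w₂ = ι (Zorn.norm c) := by rw [hw₂def]; linear_combination -hw₁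
  -- the two root sets
  obtain ⟨hA₁fin, hA₁card⟩ := ZornAux.root_set_bound n hn (fun k => ι (α k)) hαK w₁
  obtain ⟨hA₂fin, hA₂card⟩ := ZornAux.root_set_bound n hn (fun k => ι (α k)) hαK w₂
  set A₁ := {ρ : K | ∑ k ∈ Finset.Icc 1 n, ι (α k) * ρ ^ k = w₁} with hA₁
  set A₂ := {ρ : K | ∑ k ∈ Finset.Icc 1 n, ι (α k) * ρ ^ k = w₂} with hA₂
  -- each solution gives a pair of roots
  have key : ∀ x ∈ X, ∃ p : K × K, (p.1 ∈ A₁ ∧ p.2 ∈ A₂) ∧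
      p.1 + p.2 = ι (Zorn.trace x) ∧ p.1 * p.2 = ι (Zorn.norm x) := by
    intro x hx
    have hx' : Zorn.fOct n α x = c := hx
    obtain ⟨hh, hxeq, e1, e2⟩ := ZornAux.solution_props hc hx'
    set y := Zorn.trace x with hy
    set z := -Zorn.norm x with hz
    set h := Zorn.fHat n α y z with hhd
    set s := z * Zorn.fCheck n α y z with hsd
    obtain ⟨ρ, hρ⟩ := ZornAux.exists_quad_root (ι y) (ι z)
    set σ := ι y - ρ with hσd
    have hσ : σ * σ = ι y * σ + ι z := by rw [hσd]; linear_combination hρ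
    have hsum : ρ + σ = ι y := by rw [hσd]; ring
    have hprod : ρ * σ = -(ι z) := by rw [hσd]; linear_combination -hρ
    have hprod' : ρ * σ = ι (Zorn.norm x) := by
      rw [hprod, hz, map_neg, neg_neg]
    have hmapH : ι h = Zorn.fHat n (fun k => ι (α k)) (ι y) (ι z) := ZornAux.map_fHat ι n α y z
    have hmapS : ι s = ι z * Zorn.fCheck n (fun k => ι (α k)) (ι y) (ι z) := by
      rw [hsd, map_mul, ZornAux.map_fCheck]
    have hfρ : ∑ k ∈ Finset.Icc 1 n, ι (α k) * ρ ^ k = ι h * ρ + ι s := by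
      rw [ZornAux.scalar_f n (fun k => ι (α k)) (ι y) (ι z) ρ hρ, hmapH, hmapS]
    have hfσ : ∑ k ∈ Finset.Icc 1 n, ι (α k) * σ ^ k = ι h * σ + ι s := by
      rw [ZornAux.scalar_f n (fun k => ι (α k)) (ι y) (ι z) σ hσ, hmapH, hmapS]
    have e1' : ι h * ι y + 2 * ι s = ι (Zorn.trace c) := by
      have := congrArg ι e1
      simpa [map_add, map_mul, map_ofNat] using this
    have e2' : (ι h) ^ 2 * ι z + (ι s) ^ 2 = ι (Zorn.trace c) * ι s - ι (Zorn.norm c) := by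
      have := congrArg ι e2
      simpa [map_add, map_mul, map_sub, map_pow] using this
    rcases ZornAux.key_alg (ι h) (ι s) (ι y) (ι z) (ι (Zorn.trace c)) (ι (Zorn.norm c)) ρ σ w₁ w₂
        e1' e2' hsum hprod hwsum hwprod with ⟨ha1, ha2⟩ | ⟨ha1, ha2⟩
    · exact ⟨(ρ, σ), ⟨hfρ.trans ha1, hfσ.trans ha2⟩, hsum, hprod'⟩
    · refine ⟨(σ, ρ), ⟨hfσ.trans ha2, hfρ.trans ha1⟩, ?_, ?_⟩
      · rw [add_comm]; exact hsum
      · rw [mul_comm]; exact hprod'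
  -- the choice function
  set f : Zorn F → K × K := fun x => if hx : x ∈ X then (key x hx).choose else (0, 0) with hf
  have hfmem : ∀ x (hx : x ∈ X), (f x).1 ∈ A₁ ∧ (f x).2 ∈ A₂ := by
    intro x hx
    simp only [hf, dif_pos hx]
    exact ((key x hx).choose_spec).1
  have hfinv : ∀ x (hx : x ∈ X),
      (f x).1 + (f x).2 = ι (Zorn.trace x) ∧ (f x).1 * (f x).2 = ι (Zorn.norm x) := by
    intro x hx
    simp only [hf, dif_pos hx]
    exact ((key x hx).choose_spec).2
  have hinj : Set.InjOn f X := by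
    intro x hx x' hx' hfe
    obtain ⟨s1, p1⟩ := hfinv x hx
    obtain ⟨s2, p2⟩ := hfinv x' hx'
    have ht : Zorn.trace x = Zorn.trace x' := ιinj (by rw [← s1, ← s2, hfe])
    have hnm : Zorn.norm x = Zorn.norm x' := ιinj (by rw [← p1, ← p2, hfe])
    obtain ⟨-, hxeq, -, -⟩ := ZornAux.solution_props hc (hx : Zorn.fOct n α x = c)
    obtain ⟨-, hxeq', -, -⟩ := ZornAux.solution_props hc (hx' : Zorn.fOct n α x' = c)
    rw [hxeq, hxeq', ht, hnm]
  have himg : f '' X ⊆ ↑(hA₁fin.toFinset ×ˢ hA₂fin.toFinset) := by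
    rintro - ⟨x, hx, rfl⟩
    obtain ⟨m1, m2⟩ := hfmem x hx
    simp only [Finset.coe_product, Set.mem_prod, Set.Finite.coe_toFinset]
    exact ⟨m1, m2⟩
  have hfinX : X.Finite :=
    Set.Finite.of_finite_image (Set.Finite.subset (Finset.finite_toSet _) himg) hinj
  refine ⟨hfinX, ?_⟩
  calc X.ncard = (f '' X).ncard := (Set.ncard_image_of_injOn hinj).symm
    _ ≤ (↑(hA₁fin.toFinset ×ˢ hA₂fin.toFinset) : Set (K × K)).ncard :=
        Set.ncard_le_ncard himg (Finset.finite_toSet _)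
    _ = (hA₁fin.toFinset ×ˢ hA₂fin.toFinset).card := Set.ncard_coe_finset _
    _ = hA₁fin.toFinset.card * hA₂fin.toFinset.card := Finset.card_product _ _
    _ ≤ n * n := by
        refine Nat.mul_le_mul ?_ ?_
        · rw [← Set.ncard_eq_toFinset_card A₁ hA₁fin]; exact hA₁card
        · rw [← Set.ncard_eq_toFinset_card A₂ hA₂fin]; exact hA₂card
    _ = n ^ 2 := (sq n).symm
end
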